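/- For every Young diagram λ inside the k×(n−k) rectangle, the sequence w_λ·𝟏 ∈ E has pluses exactly at the positions a(i) = k + λ_i − i + 1 for 1 ≤ i ≤ k (and minuses at all other positions). -/

import Mathlib

open scoped Classical

set_option maxHeartbeats 1000000
set_option synthInstance.maxHeartbeats 1000000

noncomputable section

/-- The field ℚ(v) of rational functions. -/
abbrev F : Type := RatFunc ℚ

/-- The variable v. -/
def v : F := RatFunc.X

/-- The quantum integer [r] = (v^r - v^{-r})/(v - v^{-1}). -/
def qint (r : ℕ) : F := (v ^ r - v⁻¹ ^ r) / (v - v⁻¹)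

/-- Sequences of n signs (`true` = `+`) with exactly k pluses. -/
abbrev Stt (n k : ℕ) := {ε : Fin n → Bool // (Finset.univ.filter fun t => ε t = true).card = k}

/-- The adjacent transposition s_m ∈ S_n (1-based: swaps positions m and m+1). -/
def sperm (n m : ℕ) : Equiv.Perm (Fin n) :=
  if h : 1 ≤ m ∧ m < n then Equiv.swap ⟨m - 1, by omega⟩ ⟨m, h.2⟩ else 1

/-- Action of w ∈ S_n on sequences: (w·ε)_{w(t)} = ε_t. -/
def actE {n : ℕ} (w : Equiv.Perm (Fin n)) (ε : Fin n → Bool) : Fin n → Bool :=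
  fun u => ε (w⁻¹ u)

lemma card_actE {n k : ℕ} (w : Equiv.Perm (Fin n)) (ε : Fin n → Bool)
    (h : (Finset.univ.filter fun t => ε t = true).card = k) :
    (Finset.univ.filter fun t => actE w ε t = true).card = k := by
  rw [← h]
  apply Finset.card_bij (fun t _ => w⁻¹ t)
  · intro a ha
    exact Finset.mem_filter.mpr ⟨Finset.mem_univ _, (Finset.mem_filter.mp ha).2⟩
  · intro a _ b _ hab
    exact (Equiv.injective _) hab
  · intro b hb
    refine ⟨w b, Finset.mem_filter.mpr ⟨Finset.mem_univ _, ?_⟩, by simp⟩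
    show ε (w⁻¹ (w b)) = true
    simpa using (Finset.mem_filter.mp hb).2

/-- Action of S_n on the set E of sequences with k pluses. -/
def actS {n k : ℕ} (w : Equiv.Perm (Fin n)) (ε : Stt n k) : Stt n k :=
  ⟨actE w ε.1, card_actE w ε.1 ε.2⟩

/-- The module M, free over ℚ(v) with basis E. -/
abbrev M (n k : ℕ) := Stt n k → F

/-- The basis vector of M corresponding to ε ∈ E. -/
def bv {n k : ℕ} (ε : Stt n k) : M n k := Pi.single ε 1

/-- The sequence 𝟏 = (+,…,+,−,…,−) (k pluses then n−k minuses). -/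
def oneSeq (n k : ℕ) : Fin n → Bool := fun t => decide ((t : ℕ) < k)

lemma card_oneSeq (n k : ℕ) (h : k ≤ n) :
    (Finset.univ.filter fun t => oneSeq n k t = true).card = k := by
  have : (Finset.univ.filter fun t => oneSeq n k t = true)
      = Finset.univ.map (Fin.castLEEmb h) := by
    ext t
    simp only [Finset.mem_filter, Finset.mem_univ, true_and, oneSeq, decide_eq_true_eq,
      Finset.mem_map]
    constructor
    · intro ht; exact ⟨⟨t, ht⟩, rfl⟩
    · rintro ⟨s, rfl⟩; exact s.2
  rw [this, Finset.card_map, Finset.card_univ, Fintype.card_fin]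

/-- 𝟏 as an element of E. -/
def oneS (n k : ℕ) (h : k ≤ n) : Stt n k := ⟨oneSeq n k, card_oneSeq n k h⟩

/-- The operator T_m on M (1 ≤ m ≤ n−1), defined on basis elements. -/
def Thk (n k : ℕ) (m : ℕ) : M n k →ₗ[F] M n k :=
  (Pi.basisFun F (Stt n k)).constr ℕ fun ε =>
    if h : 1 ≤ m ∧ m < n then
      let a := ε.1 ⟨m - 1, by omega⟩
      let b := ε.1 ⟨m, h.2⟩
      if a = true ∧ b = false then bv (actS (sperm n m) ε)
      else if a = b then (-v⁻¹) • bv ε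
      else bv (actS (sperm n m) ε) + (v - v⁻¹) • bv ε
    else 0

/-- A Young diagram inside the k×(n−k) rectangle, given by its row lengths
(1-based: row i has lam i boxes). -/
def IsYoung (n k : ℕ) (lam : ℕ → ℕ) : Prop :=
  (∀ i, 1 ≤ i → lam (i + 1) ≤ lam i) ∧ lam 1 ≤ n - k ∧ (∀ i, k < i → lam i = 0)

/-- The boxes of λ, listed row by row from the bottom row to the top row,
each row from its last box to its first (so box (1,1) comes last). -/
def boxList (k : ℕ) (lam : ℕ → ℕ) : List (ℕ × ℕ) :=
  ((List.range k).reverse.map fun i' =>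
    (List.range (lam (i' + 1))).reverse.map fun j' => (i' + 1, j' + 1)).flatten

/-- The word of w_λ: letter k+j−i for box (i,j). -/
def wword (k : ℕ) (lam : ℕ → ℕ) : List ℕ := (boxList k lam).map fun b => k + b.2 - b.1

/-- The permutation w_λ = ∏_{(i,j)∈λ} s_{k+j−i} (box (1,1) rightmost). -/
def wperm (n k : ℕ) (lam : ℕ → ℕ) : Equiv.Perm (Fin n) := ((wword k lam).map (sperm n)).prod

/-- w_λ·𝟏 as an element of E. -/
def wSt (n k : ℕ) (h : k ≤ n) (lam : ℕ → ℕ) : Stt n k := actS (wperm n k lam) (oneS n k h)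

/-- r is the system of shifts of λ: r_{ij} = max(r_{i,j+1}, r_{i+1,j}) + 1 on boxes of λ,
and r_{ij} = 0 off λ. -/
def IsShifts (lam : ℕ → ℕ) (r : ℕ → ℕ → ℕ) : Prop :=
  ∀ i j, r i j = if 1 ≤ i ∧ 1 ≤ j ∧ j ≤ lam i then max (r i (j + 1)) (r (i + 1) j) + 1 else 0

/-- The operator X_λ = ∏_{(i,j)∈λ} (T_{k+j−i} − v^{r_{ij}}/[r_{ij}]), the factor of
box (1,1) applied first. -/
def Xop (n k : ℕ) (lam : ℕ → ℕ) (r : ℕ → ℕ → ℕ) : Module.End F (M n k) :=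
  ((boxList k lam).map fun b =>
    (Thk n k (k + b.2 - b.1) - (v ^ r b.1 b.2 / qint (r b.1 b.2)) • (1 : Module.End F (M n k)) : Module.End F (M n k))).prod

/-- O(v^m): rational functions with a zero of order ≥ m at v = 0. -/
def Ozero (m : ℕ) : Set F :=
  {f | ∃ p q : Polynomial ℚ, Polynomial.eval 0 q ≠ 0 ∧
        f = v ^ m * (algebraMap (Polynomial ℚ) F p / algebraMap (Polynomial ℚ) F q)}

/-- Value of a sequence at the 1-based position t. -/
def posVal {n : ℕ} (ε : Fin n → Bool) (t : ℕ) : Bool :=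
  if h : 1 ≤ t ∧ t ≤ n then ε ⟨t - 1, by omega⟩ else false

/-- a(i) = k + λ_i − i + 1 for 1 ≤ i ≤ k, and a(i) = 0 for i > k. -/
def aF (k : ℕ) (lam : ℕ → ℕ) (i : ℕ) : ℕ := if i ≤ k then k + lam i + 1 - i else 0

/-- The contribution r_t(ε) to the weight. -/
def weightT (k : ℕ) (lam : ℕ → ℕ) (r : ℕ → ℕ → ℕ) {n : ℕ} (ε : Fin n → Bool) (t : ℕ) : ℕ :=
  ∑ i ∈ Finset.Icc 1 k,
    ((if posVal ε t = false ∧ 1 ≤ lam i ∧ t = aF k lam i then r i (lam i) - 1 else 0) +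
     (if posVal ε t = true ∧ aF k lam (i + 1) < t ∧ t < aF k lam i then r i (t + i - k) else 0))

/-- The weight r_λ(ε) = Σ_{t=1}^n r_t(ε). -/
def weight (n k : ℕ) (lam : ℕ → ℕ) (r : ℕ → ℕ → ℕ) (ε : Fin n → Bool) : ℕ :=
  ∑ t ∈ Finset.Icc 1 n, weightT k lam r ε t

/-- 𝓛_λ = Σ_ε O(v^{r_λ(ε)}) ε. -/
def Lset (n k : ℕ) (lam : ℕ → ℕ) (r : ℕ → ℕ → ℕ) : Set (M n k) :=
  {m | ∀ ε : Stt n k, m ε ∈ Ozero (weight n k lam r ε.1)}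

/-- The length (number of inversions) of a permutation. -/
def len {n : ℕ} (w : Equiv.Perm (Fin n)) : ℕ :=
  (Finset.univ.filter fun p : Fin n × Fin n => p.1 < p.2 ∧ w p.2 < w p.1).card

/-- The parabolic subgroup W_J = S_k × S_{n−k}: permutations mapping {1,…,k} to itself. -/
def WJ (n k : ℕ) : Set (Equiv.Perm (Fin n)) :=
  {σ | ∀ t : Fin n, (t : ℕ) < k → ((σ t : ℕ) < k)}

/-- W^J: permutations of minimal length in their coset w·W_J. -/
def Wmin (n k : ℕ) : Set (Equiv.Perm (Fin n)) :=
  {w | ∀ σ ∈ WJ n k, len w ≤ len (w * σ)}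

/-- The variable x_p (1-based position p) in ℚ(v)[x_1,…,x_n]. -/
def xv (n p : ℕ) : MvPolynomial (Fin n) F :=
  if h : 1 ≤ p ∧ p ≤ n then MvPolynomial.X ⟨p - 1, by omega⟩ else 0

/-- Exchange of the variables x_i and x_{i+1} (1-based, 1 ≤ i ≤ n−1). -/
def swapf (n i : ℕ) (f : MvPolynomial (Fin n) F) : MvPolynomial (Fin n) F :=
  if h : 1 ≤ i ∧ i < n then
    MvPolynomial.rename (Equiv.swap ⟨i - 1, by omega⟩ ⟨i, h.2⟩) f
  else f

/-- The divided difference ∂_i f = (f − s_i f)/(x_i − x_{i+1}). -/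
def ddiff (n i : ℕ) (f : MvPolynomial (Fin n) F) : MvPolynomial (Fin n) F :=
  if h : ∃ g, f - swapf n i f = (xv n i - xv n (i + 1)) * g then h.choose else 0

/-- The operator ∇_i f = (v x_{i+1} − v⁻¹ x_i)·∂_i f. -/
def nabla (n i : ℕ) (f : MvPolynomial (Fin n) F) : MvPolynomial (Fin n) F :=
  (MvPolynomial.C v * xv n (i + 1) - MvPolynomial.C v⁻¹ * xv n i) * ddiff n i f

/-- Parenthesis matching: minuses (`false`) are openers, pluses (`true`) are closers;
each plus is matched with the most recent unmatched minus, i.e. each minus with the first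
subsequent unmatched plus.  Returns the list of matched pairs (p,q) of 1-based positions
and the list of unmatched minus positions. -/
def matchAux : List Bool → ℕ → List ℕ → List (ℕ × ℕ) × List ℕ
  | [], _, stack => ([], stack)
  | b :: rest, pos, stack =>
    if b then
      match stack with
      | [] => matchAux rest (pos + 1) []
      | p :: stack' =>
        let res := matchAux rest (pos + 1) stack'
        ((p, pos) :: res.1, res.2)
    else matchAux rest (pos + 1) (pos :: stack)

/-- d(ε) = #{(p,q) : p < q, ε_p = −, ε_q = +}. -/
def dstat {n : ℕ} (ε : Fin n → Bool) : ℕ :=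
  (Finset.univ.filter fun pq : Fin n × Fin n =>
    pq.1 < pq.2 ∧ ε pq.1 = false ∧ ε pq.2 = true).card

/-- The polynomial Q_ε. -/
def Qpoly (n : ℕ) (ε : Fin n → Bool) : MvPolynomial (Fin n) F :=
  MvPolynomial.C (v⁻¹ ^ dstat ε) *
    ((matchAux (List.ofFn ε) 1 []).1.map fun pq =>
        xv n pq.1 - MvPolynomial.C (v ^ (pq.2 + 1 - pq.1)) * xv n pq.2).prod *
    ((matchAux (List.ofFn ε) 1 []).2.map fun p => xv n p).prod

/-- The operator T_m on M′ (the parabolic module induced from T_j ↦ v). -/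
def Thk' (n k : ℕ) (m : ℕ) : M n k →ₗ[F] M n k :=
  (Pi.basisFun F (Stt n k)).constr ℕ fun ε =>
    if h : 1 ≤ m ∧ m < n then
      let a := ε.1 ⟨m - 1, by omega⟩
      let b := ε.1 ⟨m, h.2⟩
      if a = true ∧ b = false then bv (actS (sperm n m) ε)
      else if a = b then v • bv ε
      else bv (actS (sperm n m) ε) + (v - v⁻¹) • bv ε
    else 0

/-- The map Φ : M′ → ℚ(v)[x_1,…,x_n], ε ↦ v^{−d(ε)} ∏_{t : ε_t = −} x_t. -/
def Phi (n k : ℕ) : M n k →ₗ[F] MvPolynomial (Fin n) F :=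
  (Pi.basisFun F (Stt n k)).constr ℕ fun ε =>
    MvPolynomial.C (v⁻¹ ^ dstat ε.1) *
      ∏ t ∈ Finset.univ.filter (fun t => ε.1 t = false), MvPolynomial.X t

/-- The space P(k,n): polynomials homogeneous of total degree n−k, of degree ≤ 1 in each
variable. -/
def Pspace (n k : ℕ) : Set (MvPolynomial (Fin n) F) :=
  {f | f.IsHomogeneous (n - k) ∧ ∀ t : Fin n, f.degreeOf t ≤ 1}

/-
Row `i` of `λ` contributes the factor `s_{k-i+λ_i} ⋯ s_{k-i+1}`, the cycle moving position `k-i+1`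
to `k-i+1+λ_i` and shifting the positions in between down by one. The rows act from the top one
down, so a position `p ≤ k` is moved only by row `k+1-p`, to `p + λ_{k+1-p}`: the rows above it
act first and only touch positions `> p`, and the rows below act afterwards and, `λ` being
antitone, only touch positions `< p + λ_{k+1-p}`.
-/

namespace IsYoung

variable {n k : ℕ} {lam : ℕ → ℕ}

theorem antitoneOn (hY : IsYoung n k lam) : AntitoneOn lam (Set.Ici 1) :=
  antitoneOn_nat_Ici_of_succ_le hY.1

theorem le_of_le (hY : IsYoung n k lam) {a b : ℕ} (ha : 1 ≤ a) (hab : a ≤ b) : lam b ≤ lam a :=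
  hY.antitoneOn ha (le_trans ha hab) hab

theorem le_width (hY : IsYoung n k lam) {i : ℕ} (hi : 1 ≤ i) : lam i ≤ n - k :=
  (hY.le_of_le le_rfl hi).trans hY.2.1

end IsYoung

theorem sperm_val_apply {n m : ℕ} (hm : 1 ≤ m ∧ m < n) (p : Fin n) :
    ((sperm n m p : Fin n) : ℕ) =
      if (p : ℕ) = m - 1 then m else if (p : ℕ) = m then m - 1 else p := by
  rw [sperm, dif_pos hm, Equiv.swap_apply_def]
  simp only [Fin.ext_iff]
  split_ifs <;> simp_all

/-- `s_{c+l} ⋯ s_{c+1}`, a cycle of the 0-based positions `c, …, c+l`. -/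
def rowPerm (n c l : ℕ) : Equiv.Perm (Fin n) :=
  ((List.range l).reverse.map fun j => sperm n (c + 1 + j)).prod

theorem rowPerm_succ (n c l : ℕ) : rowPerm n c (l + 1) = sperm n (c + 1 + l) * rowPerm n c l := by
  simp [rowPerm, List.range_succ]

theorem rowPerm_val_apply {n c l : ℕ} (h : c + l < n) (p : Fin n) :
    ((rowPerm n c l p : Fin n) : ℕ) =
      if (p : ℕ) = c then c + l else if c < p ∧ (p : ℕ) ≤ c + l then p - 1 else p := by
  induction l with
  | zero => simp only [rowPerm, List.range_zero, List.reverse_nil, List.map_nil,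
      List.prod_nil, Equiv.Perm.one_apply]; split_ifs <;> omega
  | succ l ih =>
    rw [rowPerm_succ, Equiv.Perm.mul_apply, sperm_val_apply (by omega), ih (by omega)]
    split_ifs <;> omega

theorem wperm_eq_prod_rowPerm (n k : ℕ) (lam : ℕ → ℕ) :
    wperm n k lam =
      ((List.range k).reverse.map fun i => rowPerm n (k - 1 - i) (lam (i + 1))).prod := by
  simp only [wperm, wword, boxList, rowPerm, List.map_flatten, List.prod_flatten, List.map_map]
  congr 1
  refine List.map_congr_left fun i hi => ?_
  have hik : i < k := by simpa using hi
  simp only [List.map_map, Function.comp_def]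
  congr 2
  funext j
  congr 1
  omega

theorem prod_rowPerm_val_apply {n k : ℕ} {lam : ℕ → ℕ} (hkn : k ≤ n) (hY : IsYoung n k lam)
    {m : ℕ} (hm : m ≤ k) {p : Fin n} (hp : (p : ℕ) < k) :
    ((((List.range m).reverse.map fun i => rowPerm n (k - 1 - i) (lam (i + 1))).prod p
      : Fin n) : ℕ) = if k - m ≤ p then p + lam (k - p) else p := by
  induction m with
  | zero => simp only [List.range_zero, List.reverse_nil, List.map_nil, List.prod_nil,
      Equiv.Perm.one_apply]; split_ifs <;> omega
  | succ m ih =>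
    have hrow := hY.le_width (i := m + 1) (by omega)
    simp only [List.range_succ, List.reverse_append, List.reverse_singleton,
      List.singleton_append, List.map_cons, List.prod_cons, Equiv.Perm.mul_apply]
    rw [rowPerm_val_apply (by omega), ih (by omega)]
    by_cases hpm : k - m ≤ p
    · have := hY.le_of_le (a := k - p) (b := m + 1) (by omega) (by omega)
      split_ifs <;> omega
    · by_cases hpc : (p : ℕ) = k - 1 - m
      · rw [show k - (p : ℕ) = m + 1 by omega]
        split_ifs <;> omega
      · split_ifs <;> omega

theorem wperm_val_apply_of_lt {n k : ℕ} {lam : ℕ → ℕ} (hkn : k ≤ n) (hY : IsYoung n k lam)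
    (p : Fin n) (hp : (p : ℕ) < k) : ((wperm n k lam p : Fin n) : ℕ) = p + lam (k - p) := by
  rw [wperm_eq_prod_rowPerm, prod_rowPerm_val_apply hkn hY le_rfl hp, if_pos (by omega)]

theorem wSt_plus_positions_general (n k : ℕ) (hkn : k < n)
    (lam : ℕ → ℕ) (hY : IsYoung n k lam) :
    ∀ t : Fin n,
      ((wSt n k hkn.le lam).1 t = true ↔
        ∃ i, 1 ≤ i ∧ i ≤ k ∧ (t : ℕ) + 1 = k + lam i + 1 - i) := by
  intro t
  obtain ⟨p, rfl⟩ := (wperm n k lam).surjective t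
  have hw := wperm_val_apply_of_lt hkn.le hY
  simp only [wSt, actS, actE, oneS, oneSeq, Equiv.Perm.coe_inv, Equiv.symm_apply_apply,
    decide_eq_true_eq]
  constructor
  · intro hp
    exact ⟨k - p, by omega, by omega, by rw [hw p hp]; omega⟩
  · rintro ⟨i, hi, hik, ht⟩
    have hq : k - i < n := by omega
    have hwq : ((wperm n k lam ⟨k - i, hq⟩ : Fin n) : ℕ) = k - i + lam i := by
      rw [hw _ (by simp only; omega), show k - (k - i) = i by omega]
    have hpq : wperm n k lam ⟨k - i, hq⟩ = wperm n k lam p := Fin.ext (by omega)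
    rw [← (wperm n k lam).injective hpq]
    show k - i < k
    omega

/-- w_λ·𝟏 has pluses exactly at the positions a(i) = k + λ_i − i + 1,
1 ≤ i ≤ k. -/
theorem wSt_plus_positions (n k : ℕ) (hk : 0 < k) (hkn : k < n)
    (lam : ℕ → ℕ) (hY : IsYoung n k lam) :
    ∀ t : Fin n,
      ((wSt n k hkn.le lam).1 t = true ↔
        ∃ i, 1 ≤ i ∧ i ≤ k ∧ (t : ℕ) + 1 = k + lam i + 1 - i) :=
  wSt_plus_positions_general n k hkn lam hY

end
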